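/- arXiv:2410.23632 — 3 statements merged into one kernel-verified Lean document; each statement's English description precedes it below -/
import Mathlib

section
/- The function φ : ℝ → ℝ defined by φ(z) = 2 − z for z ≤ 0 and φ(z) = (z + 2)·exp(−z) for z > 0 has a Lipschitz continuous derivative: for all a, b ∈ ℝ, |φ′(a) − φ′(b)| ≤ (1/e)·|a − b|; in particular φ is 1-smooth, i.e. |φ′(a) − φ′(b)| ≤ |a − b| for all a, b ∈ ℝ. -/
/-- The derivative of the potential function: φ′(z) = −1 for z ≤ 0 and
φ′(z) = −(z + 1)·exp(−z) for z > 0. -/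
noncomputable def phi' (z : ℝ) : ℝ := if z ≤ 0 then -1 else -(z + 1) * Real.exp (-z)

lemma phi'_eq (z : ℝ) : phi' z = -(max z 0 + 1) * Real.exp (-(max z 0)) := by
  unfold phi'
  by_cases h : z ≤ 0
  · simp [h, max_eq_right h]
  · simp [h, max_eq_left (le_of_lt (lt_of_not_ge h))]

lemma f_lip {x y : ℝ} (hx : 0 ≤ x) (hy : 0 ≤ y) :
    |(-(y + 1) * Real.exp (-y)) - (-(x + 1) * Real.exp (-x))| ≤ (1 / Real.exp 1) * |y - x| := by
  have key := Convex.norm_image_sub_le_of_norm_hasDerivWithin_le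
    (f := fun z : ℝ => -(z + 1) * Real.exp (-z)) (f' := fun z : ℝ => z * Real.exp (-z))
    (s := Set.Ici (0:ℝ)) (C := 1 / Real.exp 1)
    (fun z _ => by
      have h1 : HasDerivAt (fun z : ℝ => -(z + 1) * Real.exp (-z)) (z * Real.exp (-z)) z := by
        have h2 : HasDerivAt (fun z : ℝ => Real.exp (-z)) (-Real.exp (-z)) z := by
          exact ((Real.hasDerivAt_exp (-z)).comp z (hasDerivAt_neg z)).congr_deriv (by ring)
        have h3 : HasDerivAt (fun z : ℝ => -(z + 1)) (-1) z := by
          exact ((hasDerivAt_id z).add_const 1).neg.congr_deriv (by ring)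
        have := h3.mul h2
        exact this.congr_deriv (by ring)
      exact h1.hasDerivWithinAt)
    (fun z hz => by
      have hz0 : (0:ℝ) ≤ z := hz
      rw [Real.norm_eq_abs, abs_of_nonneg (mul_nonneg hz0 (Real.exp_pos _).le)]
      have h1 : z ≤ Real.exp (z - 1) := by
        have := Real.add_one_le_exp (z - 1)
        linarith
      calc z * Real.exp (-z) ≤ Real.exp (z - 1) * Real.exp (-z) := by
            exact mul_le_mul_of_nonneg_right h1 (Real.exp_pos _).le
        _ = 1 / Real.exp 1 := by
            rw [← Real.exp_add, div_eq_mul_inv, one_mul, ← Real.exp_neg]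
            ring_nf
        )
    (convex_Ici 0) hx hy
  simpa [Real.norm_eq_abs] using key

/-- φ′ is (1/e)-Lipschitz; in particular φ is 1-smooth: |φ′(a) − φ′(b)| ≤ |a − b|. -/
theorem phi'_lipschitz :
    (∀ a b : ℝ, |phi' a - phi' b| ≤ (1 / Real.exp 1) * |a - b|) ∧
    (∀ a b : ℝ, |phi' a - phi' b| ≤ |a - b|) := by
  have main : ∀ a b : ℝ, |phi' a - phi' b| ≤ (1 / Real.exp 1) * |a - b| := by
    intro a b
    rw [phi'_eq a, phi'_eq b]
    calc |(-(max a 0 + 1) * Real.exp (-(max a 0))) - (-(max b 0 + 1) * Real.exp (-(max b 0)))|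
        ≤ (1 / Real.exp 1) * |max a 0 - max b 0| :=
          f_lip (le_max_right b 0) (le_max_right a 0)
      _ ≤ (1 / Real.exp 1) * |a - b| := by
          apply mul_le_mul_of_nonneg_left _ (by positivity)
          exact abs_max_sub_max_le_abs a b 0
  refine ⟨main, fun a b => ?_⟩
  have h1 := main a b
  have h2 : (1 / Real.exp 1) * |a - b| ≤ 1 * |a - b| := by
    apply mul_le_mul_of_nonneg_right _ (abs_nonneg _)
    rw [div_le_one (Real.exp_pos 1)]
    have := Real.add_one_le_exp (1:ℝ)
    linarith
  linarith [h1, h2, one_mul |a - b|]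
end

section
/- The function φ : ℝ → ℝ defined by φ(z) = 2 − z for z ≤ 0 and φ(z) = (z + 2)·exp(−z) for z > 0 satisfies the second-order upper bound φ(a + b) ≤ φ(a) + φ′(a)·b + b²/2 for all a, b ∈ ℝ. -/
/-- The potential function φ(z) = 2 − z for z ≤ 0 and φ(z) = (z + 2)·exp(−z) for z > 0. -/
noncomputable def phi (z : ℝ) : ℝ := if z ≤ 0 then 2 - z else (z + 2) * Real.exp (-z)

noncomputable def psi (z : ℝ) : ℝ := if z ≤ 0 then 0 else z * Real.exp (-z)

open Real Set Filter

lemma hasDerivAt_g1 (z : ℝ) :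
    HasDerivAt (fun z : ℝ => (z + 2) * Real.exp (-z)) (-(z + 1) * Real.exp (-z)) z := by
  have he : HasDerivAt (fun z : ℝ => Real.exp (-z)) (-Real.exp (-z)) z := by
    simpa [Function.comp_def] using (Real.hasDerivAt_exp (-z)).comp z (hasDerivAt_neg z)
  have := ((hasDerivAt_id z).add_const 2).fun_mul he
  refine this.congr_deriv ?_
  simp; ring

lemma hasDerivAt_g1' (z : ℝ) :
    HasDerivAt (fun z : ℝ => -(z + 1) * Real.exp (-z)) (z * Real.exp (-z)) z := by
  have he : HasDerivAt (fun z : ℝ => Real.exp (-z)) (-Real.exp (-z)) z := by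
    simpa [Function.comp_def] using (Real.hasDerivAt_exp (-z)).comp z (hasDerivAt_neg z)
  have := (((hasDerivAt_id z).add_const 1).neg).fun_mul he
  refine this.congr_deriv ?_
  simp; ring

lemma hasDerivAt_phi (z : ℝ) : HasDerivAt phi (phi' z) z := by
  rcases lt_trichotomy z 0 with hz | hz | hz
  · have hev : phi =ᶠ[nhds z] fun z => 2 - z := by
      filter_upwards [Iio_mem_nhds hz] with x hx
      simp [phi, hx.out.le]
    have : HasDerivAt (fun z : ℝ => 2 - z) (-1) z := by
      simpa using (hasDerivAt_id z).const_sub 2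
    rw [phi', if_pos hz.le]
    exact this.congr_of_eventuallyEq hev
  · subst hz
    have h1 : HasDerivWithinAt phi (-1) (Iic 0) 0 := by
      have : HasDerivWithinAt (fun z : ℝ => 2 - z) (-1) (Iic 0) 0 := by
        simpa using ((hasDerivAt_id (0:ℝ)).const_sub 2).hasDerivWithinAt
      exact this.congr (fun x hx => by simp [phi, mem_Iic.mp hx]) (by simp [phi])
    have h2 : HasDerivWithinAt phi (-1) (Ici 0) 0 := by
      have h := (hasDerivAt_g1 0).hasDerivWithinAt (s := Ici 0)
      simp only [neg_add, zero_add, neg_zero, Real.exp_zero, mul_one] at h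
      refine HasDerivWithinAt.congr (by simpa using h) (fun x hx => ?_) (by norm_num [phi])
      rcases eq_or_lt_of_le (mem_Ici.mp hx) with h | h
      · simp [phi, ← h]
      · simp [phi, not_le.mpr h]
    have := h1.union h2
    rw [Iic_union_Ici, hasDerivWithinAt_univ] at this
    simpa [phi'] using this
  · have hev : phi =ᶠ[nhds z] fun z => (z + 2) * Real.exp (-z) := by
      filter_upwards [Ioi_mem_nhds hz] with x hx
      simp [phi, not_le.mpr hx.out]
    rw [phi', if_neg (not_le.mpr hz)]
    exact (hasDerivAt_g1 z).congr_of_eventuallyEq hev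

lemma hasDerivAt_phi' (z : ℝ) : HasDerivAt phi' (psi z) z := by
  rcases lt_trichotomy z 0 with hz | hz | hz
  · have hev : phi' =ᶠ[nhds z] fun _ => (-1 : ℝ) := by
      filter_upwards [Iio_mem_nhds hz] with x hx
      simp [phi', hx.out.le]
    rw [psi, if_pos hz.le]
    exact (hasDerivAt_const z (-1 : ℝ)).congr_of_eventuallyEq hev
  · subst hz
    have h1 : HasDerivWithinAt phi' 0 (Iic 0) 0 := by
      have : HasDerivWithinAt (fun _ : ℝ => (-1:ℝ)) 0 (Iic 0) 0 :=
        (hasDerivAt_const (0:ℝ) (-1:ℝ)).hasDerivWithinAt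
      exact this.congr (fun x hx => by simp [phi', mem_Iic.mp hx]) (by simp [phi'])
    have h2 : HasDerivWithinAt phi' 0 (Ici 0) 0 := by
      have h := (hasDerivAt_g1' 0).hasDerivWithinAt (s := Ici 0)
      simp only [zero_mul] at h
      refine h.congr (fun x hx => ?_) (by norm_num [phi'])
      rcases eq_or_lt_of_le (mem_Ici.mp hx) with h | h
      · simp [phi', ← h]
      · simp [phi', not_le.mpr h]
    have := h1.union h2
    rw [Iic_union_Ici, hasDerivWithinAt_univ] at this
    simpa [psi] using this
  · have hev : phi' =ᶠ[nhds z] fun z => -(z + 1) * Real.exp (-z) := by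
      filter_upwards [Ioi_mem_nhds hz] with x hx
      simp [phi', not_le.mpr hx.out]
    rw [psi, if_neg (not_le.mpr hz)]
    exact (hasDerivAt_g1' z).congr_of_eventuallyEq hev

lemma psi_le_one (z : ℝ) : psi z ≤ 1 := by
  rw [psi]
  split_ifs with h
  · norm_num
  · push_neg at h
    rw [Real.exp_neg]
    rw [mul_inv_le_iff₀ (Real.exp_pos z), one_mul]
    linarith [Real.add_one_le_exp z]

lemma h_mono : Monotone (fun z => z - phi' z) := by
  have hd : ∀ z, HasDerivAt (fun z => z - phi' z) (1 - psi z) z :=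
    fun z => (hasDerivAt_id z).sub (hasDerivAt_phi' z)
  apply monotone_of_deriv_nonneg
  · exact fun z => ((hd z).differentiableAt)
  · intro z
    rw [(hd z).deriv]
    linarith [psi_le_one z]

/-- The second-order upper bound φ(a + b) ≤ φ(a) + φ′(a)·b + b²/2 for all a, b ∈ ℝ. -/
theorem phi_second_order_bound :
    ∀ a b : ℝ, phi (a + b) ≤ phi a + phi' a * b + b ^ 2 / 2 := by
  intro a b
  set g : ℝ → ℝ := fun b => phi a + phi' a * b + b ^ 2 / 2 - phi (a + b) with hg
  have hd : ∀ b, HasDerivAt g (phi' a + b - phi' (a + b)) b := by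
    intro b
    have h1 : HasDerivAt (fun b : ℝ => phi a + phi' a * b + b ^ 2 / 2)
        (phi' a + b) b := by
      have := ((hasDerivAt_id b).const_mul (phi' a)).const_add (phi a)
      have h2 : HasDerivAt (fun b : ℝ => b ^ 2 / 2) b b := by
        simpa using (hasDerivAt_pow 2 b).div_const 2
      simpa [Pi.add_def] using this.add h2
    have h3 : HasDerivAt (fun b : ℝ => phi (a + b)) (phi' (a + b)) b := by
      simpa [Function.comp_def] using (hasDerivAt_phi (a + b)).comp b ((hasDerivAt_id b).const_add a)
    exact h1.sub h3
  have hg0 : g 0 = 0 := by simp [hg]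
  have key : 0 ≤ g b := by
    rcases le_total 0 b with hb | hb
    · have hmono : MonotoneOn g (Ici 0) := by
        apply monotoneOn_of_deriv_nonneg (convex_Ici 0)
          (fun z _ => ((hd z).differentiableAt.continuousAt.continuousWithinAt))
          (fun z _ => ((hd z).differentiableAt.differentiableWithinAt))
        intro z hz
        rw [(hd z).deriv]
        have hz' : 0 ≤ z := le_of_lt (by simpa using hz)
        have := h_mono (show a ≤ a + z by linarith)
        simp only at this
        linarith
      have := hmono (self_mem_Ici) (mem_Ici.mpr hb) hb
      linarith [hg0 ▸ this]
    · have hanti : AntitoneOn g (Iic 0) := by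
        apply antitoneOn_of_deriv_nonpos (convex_Iic 0)
          (fun z _ => ((hd z).differentiableAt.continuousAt.continuousWithinAt))
          (fun z _ => ((hd z).differentiableAt.differentiableWithinAt))
        intro z hz
        rw [(hd z).deriv]
        have hz' : z ≤ 0 := le_of_lt (by simpa using hz)
        have := h_mono (show a + z ≤ a by linarith)
        simp only at this
        linarith
      have := hanti (mem_Iic.mpr hb) self_mem_Iic hb
      linarith [hg0 ▸ this]
  simpa [hg] using key
end

section
/- (Freedman's inequality) Let (Y_k)_{k≥0} be a real-valued martingale with Y_0 = 0 with respect to a filtration (Σ_k)_{k≥0}, and let X_k = Y_k − Y_{k−1} for k ≥ 1 be its difference sequence. Assume |X_k| ≤ R almost surely for every k ≥ 1, and define the predictable quadratic variation W_k = Σ_{j=1}^k E[X_j² | Σ_{j−1}]. Then for all t ≥ 0 and s² > 0, P( ∃ k ≥ 0 : Y_k ≥ t and W_k ≤ s² ) ≤ exp( −t² / (2(s² + R·t/3)) ). -/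
/-!
For `|x| ≤ R` and `0 ≤ a`, `a R < 3`, comparing the exponential series with a geometric one
(`(n + 2)! ≥ 2 * 3 ^ n`) gives `exp (a x) ≤ 1 + a x + ψ x²` with `ψ = a² / (2 (1 - a R / 3))`.
Applied to a martingale increment under `E[· | Σ_k]` this yields
`E[exp (a X_{k+1}) | Σ_k] ≤ exp (ψ E[X_{k+1}² | Σ_k])`, so `exp (a Y_k - ψ W_k)` is a positive
supermartingale started at `1`. On the event `Y_k ≥ t, W_k ≤ v` it is at least
`exp (a t - ψ v)`, and Ville's maximal inequality (optional stopping at the first time the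
supermartingale reaches that level) bounds the probability by `exp (-(a t - ψ v))`.
The choice `a = t / (v + R t / 3)` makes the exponent `t² / (2 (v + R t / 3))`.
-/

open MeasureTheory ProbabilityTheory

theorem Real.exp_le_one_add_add_sq_div_of_abs_le {y r : ℝ} (hy : |y| ≤ r) (hr3 : r < 3) :
    Real.exp y ≤ 1 + y + y ^ 2 / (2 * (1 - r / 3)) := by
  have hr : 0 ≤ r := (abs_nonneg y).trans hy
  have hr0 : 0 ≤ r / 3 := by positivity
  have hr1 : r / 3 < 1 := by linarith
  have htail : HasSum (fun n => y ^ (n + 2) / (n + 2).factorial) (Real.exp y - (1 + y)) := by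
    have h := (hasSum_nat_add_iff' 2).2 (Real.exp_eq_exp_ℝ ▸ NormedSpace.expSeries_div_hasSum_exp y)
    simpa [Finset.sum_range_succ] using h
  have hgeom : HasSum (fun n => y ^ 2 / 2 * (r / 3) ^ n) (y ^ 2 / 2 * (1 - r / 3)⁻¹) :=
    (hasSum_geometric_of_lt_one hr0 hr1).mul_left _
  have hterm (n : ℕ) : y ^ (n + 2) / (n + 2).factorial ≤ y ^ 2 / 2 * (r / 3) ^ n := by
    have hfact : (2 * 3 ^ n : ℝ) ≤ (n + 2).factorial := by
      have := Nat.factorial_mul_pow_le_factorial (m := 2) (n := n)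
      rw [add_comm 2 n] at this
      exact_mod_cast this
    calc y ^ (n + 2) / (n + 2).factorial ≤ |y| ^ (n + 2) / (n + 2).factorial :=
          div_le_div_of_nonneg_right ((le_abs_self _).trans_eq (abs_pow y _)) (Nat.cast_nonneg _)
      _ ≤ y ^ 2 * r ^ n / (2 * 3 ^ n) := by
          rw [pow_add, sq_abs, mul_comm]
          gcongr
      _ = y ^ 2 / 2 * (r / 3) ^ n := by rw [div_pow]; ring
  have hbound := hasSum_le hterm htail hgeom
  rw [← div_eq_mul_inv, div_div] at hbound
  linarith

noncomputable def bernsteinCoeff (R a : ℝ) : ℝ := a ^ 2 / (2 * (1 - a * R / 3))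

theorem bernsteinCoeff_nonneg {R a : ℝ} (haR : a * R < 3) : 0 ≤ bernsteinCoeff R a :=
  div_nonneg (sq_nonneg a) (by linarith)

theorem Real.exp_mul_le_one_add_add_bernsteinCoeff_mul_sq {a R x : ℝ} (ha : 0 ≤ a)
    (haR : a * R < 3) (hx : |x| ≤ R) :
    Real.exp (a * x) ≤ 1 + a * x + bernsteinCoeff R a * x ^ 2 := by
  have hax : |a * x| ≤ a * R := by
    rw [abs_mul, abs_of_nonneg ha]
    exact mul_le_mul_of_nonneg_left hx ha
  calc Real.exp (a * x) ≤ 1 + a * x + (a * x) ^ 2 / (2 * (1 - a * R / 3)) :=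
        Real.exp_le_one_add_add_sq_div_of_abs_le hax haR
    _ = 1 + a * x + bernsteinCoeff R a * x ^ 2 := by rw [bernsteinCoeff]; ring

section

variable {Ω : Type*} {mΩ : MeasurableSpace Ω} {μ : Measure Ω}

theorem condExp_exp_mul_le_exp_condExp_sq [IsFiniteMeasure μ] {m : MeasurableSpace Ω}
    (hm : m ≤ mΩ) {X : Ω → ℝ} {a R : ℝ} (ha : 0 ≤ a) (haR : a * R < 3) (hX : Integrable X μ)
    (hXR : ∀ᵐ ω ∂μ, |X ω| ≤ R) (hX0 : μ[X | m] =ᵐ[μ] 0) :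
    μ[fun ω => Real.exp (a * X ω) | m] ≤ᵐ[μ]
      fun ω => Real.exp (bernsteinCoeff R a * μ[fun ω => X ω ^ 2 | m] ω) := by
  set ψ := bernsteinCoeff R a
  have hX2 : Integrable (fun ω => X ω ^ 2) μ := by
    refine Integrable.of_bound (hX.aestronglyMeasurable.pow 2) (R ^ 2) ?_
    filter_upwards [hXR] with ω h
    rw [Real.norm_eq_abs, abs_pow]
    exact pow_le_pow_left₀ (abs_nonneg _) h 2
  have hexp : Integrable (fun ω => Real.exp (a * X ω)) μ :=
    integrable_exp_mul_of_le a R ha hX.aemeasurable (hXR.mono fun _ h => (le_abs_self _).trans h)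
  set Q : Ω → ℝ := (fun _ => 1) + a • X + ψ • fun ω => X ω ^ 2 with hQ_def
  have hQ : Integrable Q μ := ((integrable_const 1).add (hX.smul a)).add (hX2.smul ψ)
  have hexpQ : (fun ω => Real.exp (a * X ω)) ≤ᵐ[μ] Q :=
    hXR.mono fun ω h => Real.exp_mul_le_one_add_add_bernsteinCoeff_mul_sq ha haR h
  have hcondQ : μ[Q | m] =ᵐ[μ] fun ω => 1 + ψ * μ[fun ω => X ω ^ 2 | m] ω := by
    filter_upwards [condExp_add ((integrable_const 1).add (hX.smul a)) (hX2.smul ψ) m,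
      condExp_add (integrable_const 1) (hX.smul a) m, condExp_smul a X m,
      condExp_smul ψ (fun ω => X ω ^ 2) m, hX0] with ω h1 h2 h3 h4 h5
    rw [hQ_def, h1, Pi.add_apply, h2, Pi.add_apply, h3, h4, condExp_const hm]
    simp [h5]
  filter_upwards [condExp_mono hexp hQ hexpQ, hcondQ] with ω h1 h2
  calc _ ≤ _ := h1
    _ = 1 + ψ * μ[fun ω => X ω ^ 2 | m] ω := h2
    _ ≤ _ := by linarith [Real.add_one_le_exp (ψ * μ[fun ω => X ω ^ 2 | m] ω)]

section Ville

variable [IsFiniteMeasure μ] {ℱ : Filtration ℕ mΩ} {S : ℕ → Ω → ℝ}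

theorem MeasureTheory.Supermartingale.integral_stoppedValue_le (hS : Supermartingale S ℱ μ)
    {τ : Ω → ℕ∞} (hτ : IsStoppingTime ℱ τ) {n : ℕ} (hτn : ∀ ω, τ ω ≤ n) :
    μ[stoppedValue S τ] ≤ μ[S 0] := by
  have h := hS.neg.expected_stoppedValue_mono (isStoppingTime_const ℱ 0) hτ
    (fun _ => zero_le) hτn
  have hneg : stoppedValue (-S) τ = -stoppedValue S τ := rfl
  simpa only [stoppedValue_const, hneg, Pi.neg_apply, integral_neg, neg_le_neg_iff] using h

theorem MeasureTheory.Supermartingale.mul_measureReal_exists_ge_le (hS : Supermartingale S ℱ μ)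
    (hS_nonneg : 0 ≤ S) (c : ℝ) (n : ℕ) :
    c * μ.real {ω | ∃ k ≤ n, c ≤ S k ω} ≤ μ[S 0] := by
  set τ : Ω → ℕ∞ := fun ω => (hittingBtwn S (Set.Ici c) 0 n ω : ℕ)
  have hτ : IsStoppingTime ℱ τ :=
    hS.stronglyAdapted.adapted.isStoppingTime_hittingBtwn measurableSet_Ici
  have hτn (ω : Ω) : τ ω ≤ n := Nat.cast_le.mpr (hittingBtwn_le ω)
  have hint : Integrable (stoppedValue S τ) μ := integrable_stoppedValue ℕ hτ hS.integrable hτn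
  have hmeas : MeasurableSet {ω | ∃ k ≤ n, c ≤ S k ω} := by
    simp only [Set.ofPred_exists, Set.ofPred_and]
    exact .iUnion fun k => (MeasurableSet.const _).inter
      (measurableSet_le measurable_const ((hS.stronglyMeasurable k).mono (ℱ.le k)).measurable)
  calc c * μ.real {ω | ∃ k ≤ n, c ≤ S k ω}
      ≤ ∫ ω in {ω | ∃ k ≤ n, c ≤ S k ω}, stoppedValue S τ ω ∂μ := by
        refine setIntegral_ge_of_const_le_real hmeas (measure_ne_top μ _) ?_ hint.integrableOn
        rintro ω ⟨k, hk, hck⟩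
        exact stoppedValue_hittingBtwn_mem ⟨k, ⟨Nat.zero_le k, hk⟩, hck⟩
    _ ≤ μ[stoppedValue S τ] := setIntegral_le_integral hint (ae_of_all _ fun ω => hS_nonneg _ _)
    _ ≤ μ[S 0] := hS.integral_stoppedValue_le hτ hτn

theorem MeasureTheory.Supermartingale.measure_exists_ge_le (hS : Supermartingale S ℱ μ)
    (hS_nonneg : 0 ≤ S) {c : ℝ} (hc : 0 < c) :
    μ {ω | ∃ k, c ≤ S k ω} ≤ ENNReal.ofReal (μ[S 0] / c) := by
  have hmono : Monotone fun n => {ω | ∃ k ≤ n, c ≤ S k ω} :=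
    fun m n hmn ω ⟨k, hk, h⟩ => ⟨k, hk.trans hmn, h⟩
  have hunion : {ω | ∃ k, c ≤ S k ω} = ⋃ n, {ω | ∃ k ≤ n, c ≤ S k ω} := by
    ext ω; simp only [Set.mem_ofPred_eq, Set.mem_iUnion]
    exact ⟨fun ⟨k, h⟩ => ⟨k, k, le_rfl, h⟩, fun ⟨_, k, _, h⟩ => ⟨k, h⟩⟩
  rw [hunion, hmono.measure_iUnion]
  refine iSup_le fun n => ?_
  rw [← ofReal_measureReal]
  exact ENNReal.ofReal_le_ofReal
    ((le_div_iff₀' hc).2 (hS.mul_measureReal_exists_ge_le hS_nonneg c n))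

end Ville

section Freedman

variable {ℱ : Filtration ℕ mΩ} {Y : ℕ → Ω → ℝ}

theorem MeasureTheory.Martingale.condExp_sub_ae_eq_zero (hY : Martingale Y ℱ μ) (k : ℕ) :
    μ[Y (k + 1) - Y k | ℱ k] =ᵐ[μ] 0 := by
  filter_upwards [condExp_sub (hY.integrable (k + 1)) (hY.integrable k) (ℱ k),
    hY.condExp_ae_eq k.le_succ, hY.condExp_ae_eq le_rfl] with ω h1 h2 h3
  rw [h1, Pi.sub_apply, h2, h3, sub_self, Pi.zero_apply]

variable (μ ℱ Y) in
noncomputable def predictableQuadVar (k : ℕ) (ω : Ω) : ℝ :=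
  ∑ j ∈ Finset.Icc 1 k, μ[fun ω' => (Y j ω' - Y (j - 1) ω') ^ 2 | ℱ (j - 1)] ω

@[simp]
theorem predictableQuadVar_zero : predictableQuadVar μ ℱ Y 0 = 0 := by
  funext ω; simp [predictableQuadVar]

theorem predictableQuadVar_succ (k : ℕ) :
    predictableQuadVar μ ℱ Y (k + 1) =
      predictableQuadVar μ ℱ Y k + μ[fun ω => (Y (k + 1) ω - Y k ω) ^ 2 | ℱ k] := by
  funext ω
  exact Finset.sum_Icc_succ_top (Nat.le_add_left 1 k) _

theorem stronglyMeasurable_predictableQuadVar_succ (k : ℕ) :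
    StronglyMeasurable[ℱ k] (predictableQuadVar μ ℱ Y (k + 1)) := by
  induction k with
  | zero => simpa [predictableQuadVar_succ] using stronglyMeasurable_condExp
  | succ k ih =>
    rw [predictableQuadVar_succ]
    exact (ih.mono (ℱ.mono k.le_succ)).add stronglyMeasurable_condExp

theorem stronglyAdapted_predictableQuadVar : StronglyAdapted ℱ (predictableQuadVar μ ℱ Y)
  | 0 => by simpa using stronglyMeasurable_zero
  | k + 1 => stronglyMeasurable_predictableQuadVar_succ k |>.mono (ℱ.mono k.le_succ)

variable (μ ℱ Y) in
noncomputable def freedmanExpProcess (a ψ : ℝ) (k : ℕ) (ω : Ω) : ℝ :=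
  Real.exp (a * Y k ω - ψ * predictableQuadVar μ ℱ Y k ω)

variable (μ ℱ Y) in
theorem freedmanExpProcess_pos (a ψ : ℝ) (k : ℕ) (ω : Ω) :
    0 < freedmanExpProcess μ ℱ Y a ψ k ω :=
  Real.exp_pos _

theorem freedmanExpProcess_zero (hY0 : ∀ ω, Y 0 ω = 0) (a ψ : ℝ) :
    freedmanExpProcess μ ℱ Y a ψ 0 = 1 := by
  funext ω
  simp [freedmanExpProcess, hY0]

theorem freedmanExpProcess_succ (a ψ : ℝ) (k : ℕ) (ω : Ω) :
    freedmanExpProcess μ ℱ Y a ψ (k + 1) ω =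
      freedmanExpProcess μ ℱ Y a ψ k ω *
        Real.exp (-(ψ * μ[fun ω => (Y (k + 1) ω - Y k ω) ^ 2 | ℱ k] ω)) *
        Real.exp (a * (Y (k + 1) ω - Y k ω)) := by
  simp only [freedmanExpProcess, predictableQuadVar_succ, Pi.add_apply, ← Real.exp_add]
  ring_nf

theorem stronglyAdapted_freedmanExpProcess (hY : StronglyAdapted ℱ Y) (a ψ : ℝ) :
    StronglyAdapted ℱ (freedmanExpProcess μ ℱ Y a ψ) := fun k =>
  Real.continuous_exp.comp_stronglyMeasurable
    (((hY k).const_mul a).sub (stronglyAdapted_predictableQuadVar k |>.const_mul ψ))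

theorem integrable_freedmanExpProcess [IsFiniteMeasure μ] (hY : StronglyAdapted ℱ Y)
    (hY0 : ∀ ω, Y 0 ω = 0) {a R ψ : ℝ} (hbdd : ∀ k, ∀ᵐ ω ∂μ, |Y (k + 1) ω - Y k ω| ≤ R)
    (ha : 0 ≤ a) (hψ : 0 ≤ ψ) (k : ℕ) :
    Integrable (freedmanExpProcess μ ℱ Y a ψ k) μ := by
  induction k with
  | zero => rw [freedmanExpProcess_zero hY0]; exact integrable_const 1
  | succ k ih =>
    refine (ih.const_mul (Real.exp (a * R))).mono'
      ((stronglyAdapted_freedmanExpProcess hY a ψ (k + 1)).mono (ℱ.le _)).aestronglyMeasurable ?_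
    filter_upwards [hbdd k, condExp_nonneg (m := ℱ k) (μ := μ)
      (ae_of_all μ fun ω => sq_nonneg (Y (k + 1) ω - Y k ω))] with ω hX hV
    rw [Real.norm_eq_abs, abs_of_pos (freedmanExpProcess_pos μ ℱ Y a ψ (k + 1) ω),
      freedmanExpProcess_succ]
    have hS := (freedmanExpProcess_pos μ ℱ Y a ψ k ω).le
    have hexpV : Real.exp (-(ψ * μ[fun ω => (Y (k + 1) ω - Y k ω) ^ 2 | ℱ k] ω)) ≤ 1 :=
      Real.exp_le_one_iff.2 (neg_nonpos.2 (mul_nonneg hψ hV))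
    have hexpX : Real.exp (a * (Y (k + 1) ω - Y k ω)) ≤ Real.exp (a * R) :=
      Real.exp_le_exp.2 (mul_le_mul_of_nonneg_left ((le_abs_self _).trans hX) ha)
    calc _ ≤ freedmanExpProcess μ ℱ Y a ψ k ω * 1 * Real.exp (a * R) :=
          mul_le_mul (mul_le_mul_of_nonneg_left hexpV hS) hexpX (Real.exp_pos _).le
            (mul_nonneg hS zero_le_one)
      _ = Real.exp (a * R) * freedmanExpProcess μ ℱ Y a ψ k ω := by ring

theorem supermartingale_freedmanExpProcess [IsFiniteMeasure μ] (hY : Martingale Y ℱ μ)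
    (hY0 : ∀ ω, Y 0 ω = 0) {a R : ℝ} (hbdd : ∀ k, ∀ᵐ ω ∂μ, |Y (k + 1) ω - Y k ω| ≤ R)
    (ha : 0 ≤ a) (haR : a * R < 3) :
    Supermartingale (freedmanExpProcess μ ℱ Y a (bernsteinCoeff R a)) ℱ μ := by
  set ψ := bernsteinCoeff R a
  set S := freedmanExpProcess μ ℱ Y a ψ
  have hint := integrable_freedmanExpProcess hY.stronglyAdapted hY0 hbdd ha
    (bernsteinCoeff_nonneg haR)
  refine supermartingale_nat (stronglyAdapted_freedmanExpProcess hY.stronglyAdapted a ψ) hint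
    fun k => ?_
  set X : Ω → ℝ := fun ω => Y (k + 1) ω - Y k ω
  set V : Ω → ℝ := μ[fun ω => X ω ^ 2 | ℱ k]
  set G : Ω → ℝ := fun ω => S k ω * Real.exp (-(ψ * V ω))
  have hS_succ : S (k + 1) = G * fun ω => Real.exp (a * X ω) :=
    funext (freedmanExpProcess_succ a ψ k)
  have hG : StronglyMeasurable[ℱ k] G :=
    (stronglyAdapted_freedmanExpProcess hY.stronglyAdapted a ψ k).mul
      (Real.continuous_exp.comp_stronglyMeasurable (stronglyMeasurable_condExp.const_mul ψ).neg)
  have hX : Integrable X μ := (hY.integrable _).sub (hY.integrable _)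
  have hE : Integrable (fun ω => Real.exp (a * X ω)) μ :=
    integrable_exp_mul_of_le a R ha hX.aemeasurable
      ((hbdd k).mono fun _ h => (le_abs_self _).trans h)
  filter_upwards [condExp_mul_of_stronglyMeasurable_left hG (hS_succ ▸ hint (k + 1)) hE,
    condExp_exp_mul_le_exp_condExp_sq (ℱ.le k) ha haR hX (hbdd k) (hY.condExp_sub_ae_eq_zero k)]
    with ω h1 h2
  rw [hS_succ, h1]
  calc G ω * μ[fun ω => Real.exp (a * X ω) | ℱ k] ω ≤ G ω * Real.exp (ψ * V ω) :=
        mul_le_mul_of_nonneg_left h2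
          (mul_pos (freedmanExpProcess_pos μ ℱ Y a ψ k ω) (Real.exp_pos _)).le
    _ = S k ω := by rw [mul_assoc, ← Real.exp_add, neg_add_cancel, Real.exp_zero, mul_one]

theorem measure_exists_ge_and_predictableQuadVar_le_exp [IsProbabilityMeasure μ]
    (hY : Martingale Y ℱ μ) (hY0 : ∀ ω, Y 0 ω = 0)
    {a R : ℝ} (hbdd : ∀ k, ∀ᵐ ω ∂μ, |Y (k + 1) ω - Y k ω| ≤ R) (ha : 0 ≤ a) (haR : a * R < 3)
    (t v : ℝ) :
    μ {ω | ∃ k, t ≤ Y k ω ∧ predictableQuadVar μ ℱ Y k ω ≤ v} ≤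
      ENNReal.ofReal (Real.exp (-(a * t - bernsteinCoeff R a * v))) := by
  set ψ := bernsteinCoeff R a
  set S := freedmanExpProcess μ ℱ Y a ψ
  have hS : Supermartingale S ℱ μ := supermartingale_freedmanExpProcess hY hY0 hbdd ha haR
  have hsub : {ω | ∃ k, t ≤ Y k ω ∧ predictableQuadVar μ ℱ Y k ω ≤ v} ⊆
      {ω | ∃ k, Real.exp (a * t - ψ * v) ≤ S k ω} := by
    rintro ω ⟨k, hYk, hWk⟩
    refine ⟨k, Real.exp_le_exp.2 ?_⟩
    have := mul_le_mul_of_nonneg_left hYk ha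
    have := mul_le_mul_of_nonneg_left hWk (bernsteinCoeff_nonneg haR)
    linarith
  calc μ {ω | ∃ k, t ≤ Y k ω ∧ predictableQuadVar μ ℱ Y k ω ≤ v}
      ≤ μ {ω | ∃ k, Real.exp (a * t - ψ * v) ≤ S k ω} := measure_mono hsub
    _ ≤ ENNReal.ofReal (μ[S 0] / Real.exp (a * t - ψ * v)) :=
        hS.measure_exists_ge_le (fun k ω => (freedmanExpProcess_pos μ ℱ Y a ψ k ω).le)
          (Real.exp_pos _)
    _ = ENNReal.ofReal (Real.exp (-(a * t - ψ * v))) := by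
        simp [S, freedmanExpProcess_zero hY0, ← Real.exp_neg]

end Freedman

end

/-- Freedman's inequality: for a martingale (Y_k) with Y_0 = 0 whose difference
sequence X_k = Y_k − Y_{k−1} is uniformly bounded by R almost surely, and predictable
quadratic variation W_k = Σ_{j=1}^k E[X_j² | Σ_{j−1}],
P(∃ k, Y_k ≥ t and W_k ≤ s²) ≤ exp(−t²/(2(s² + R·t/3))). -/
theorem freedman_inequality {Ω : Type*} {mΩ : MeasurableSpace Ω}
    (μ : Measure Ω) [IsProbabilityMeasure μ]
    (ℱ : Filtration ℕ mΩ) (Y : ℕ → Ω → ℝ)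
    (hY : Martingale Y ℱ μ) (hY0 : ∀ ω, Y 0 ω = 0)
    (R : ℝ)
    (hbdd : ∀ k : ℕ, 1 ≤ k → ∀ᵐ ω ∂μ, |Y k ω - Y (k - 1) ω| ≤ R)
    (t v : ℝ) (ht : 0 ≤ t) (hv : 0 < v) :
    μ {ω | ∃ k : ℕ,
        t ≤ Y k ω ∧
        (∑ j ∈ Finset.Icc 1 k,
            (μ[fun ω' => (Y j ω' - Y (j - 1) ω') ^ 2 | ℱ (j - 1)]) ω) ≤ v} ≤
      ENNReal.ofReal (Real.exp (-(t ^ 2) / (2 * (v + R * t / 3)))) := by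
  have hR : 0 ≤ R := by
    obtain ⟨ω, hω⟩ := (hbdd 1 le_rfl).exists
    exact (abs_nonneg _).trans hω
  set D := v + R * t / 3 with hD_def
  have hD : 0 < D := by positivity
  have hbdd_succ (k : ℕ) : ∀ᵐ ω ∂μ, |Y (k + 1) ω - Y k ω| ≤ R := hbdd (k + 1) k.succ_pos
  have haR : t / D * R < 3 := by
    rw [div_mul_eq_mul_div, div_lt_iff₀ hD]
    linarith [hD_def]
  refine (measure_exists_ge_and_predictableQuadVar_le_exp hY hY0 hbdd_succ (div_nonneg ht hD.le)
    haR t v).trans_eq ?_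
  have hψ_denom : 1 - t / D * R / 3 = v / D := by field_simp; ring
  rw [bernsteinCoeff, hψ_denom]
  congr 2
  field_simp
  ring
end
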